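/- arXiv:math/0409119 — 3 statements merged into one kernel-verified Lean document; each statement's English description precedes it below -/
import Mathlib

section
/- Let M be a simply invariant subspace of RL^2, and let U be an element of the orthogonal complement of e^{iθ}M within M (i.e. U ∈ M and U is orthogonal to e^{iθ}M) with ‖U‖_2 = 1. Then |U| = 1 almost everywhere on T. -/
/-!
Since `e^{iθ}M ⊆ M`, every `e^{inθ}U` with `n ≥ 1` lies in `e^{iθ}M`, so `U ⊥ e^{inθ}U`, that is,
`∫ |U|² e^{-inθ} dθ/2π = 0`. As `|U|²` is real, all its Fourier coefficients except the mean vanish,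
and the mean is `‖U‖₂² = 1`. Hence the finite measure `|U|² dθ/2π` has the same Fourier
coefficients as `dθ/2π`; trigonometric polynomials being dense in `C(𝕋)` (Stone–Weierstrass),
the two measures coincide, so `|U|² = 1` almost everywhere.
-/

open MeasureTheory Complex

noncomputable section

instance : Fact (0 < 2 * Real.pi) := ⟨Real.two_pi_pos⟩

/-- The unit circle, modelled as `ℝ / 2πℤ`, with normalized Haar (Lebesgue) measure
of total mass `1`. -/
abbrev 𝕋 : Type := AddCircle (2 * Real.pi)

abbrev μT : Measure 𝕋 := AddCircle.haarAddCircle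

/-- `RL²`: the set of `f ∈ L²` all of whose Fourier coefficients are real. -/
def RL2 : Set (Lp ℂ 2 μT) :=
  {f | ∀ n : ℤ, (fourierCoeff (f : 𝕋 → ℂ) n).im = 0}

/-- The image `e^{iθ}·M` of a set `M ⊆ L²` under multiplication by the coordinate function. -/
def shiftSet (M : Set (Lp ℂ 2 μT)) : Set (Lp ℂ 2 μT) :=
  {g | ∃ f ∈ M, (g : 𝕋 → ℂ) =ᵐ[μT] fun t => fourier 1 t * (f : 𝕋 → ℂ) t}

open scoped ENNReal ComplexConjugate

lemma norm_fourier_apply {T : ℝ} (n : ℤ) (t : AddCircle T) : ‖fourier n t‖ = 1 :=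
  Circle.norm_coe _

lemma integral_fourier_eq_zero {T : ℝ} [Fact (0 < T)] {n : ℤ} (hn : n ≠ 0) :
    ∫ t, fourier n t ∂AddCircle.haarAddCircle (T := T) = 0 :=
  integral_eq_zero_of_add_right_eq_neg (fourier_add_half_inv_index hn Fact.out)

lemma MeasureTheory.MemLp.fourier_mul {T : ℝ} {μ : Measure (AddCircle T)} {p : ℝ≥0∞}
    {f : AddCircle T → ℂ} (hf : MemLp f p μ) (n : ℤ) :
    MemLp (fun t ↦ fourier n t * f t) p μ :=
  hf.of_le_mul (c := 1) ((map_continuous _).aestronglyMeasurable.mul hf.aestronglyMeasurable)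
    (.of_forall fun t ↦ by rw [norm_mul, norm_fourier_apply, one_mul])

lemma MeasureTheory.L2.integral_norm_sq_eq_norm_sq {α : Type*} [MeasurableSpace α]
    {μ : Measure α} (f : Lp ℂ 2 μ) : ∫ a, ‖f a‖ ^ 2 ∂μ = ‖f‖ ^ 2 := by
  rw [← Complex.ofReal_inj, ← integral_complex_ofReal]
  push_cast
  have h := L2.inner_def (𝕜 := ℂ) f f
  simp_rw [inner_self_eq_norm_sq_to_K] at h
  exact h.symm

theorem AddCircle.measure_ext_of_integral_fourier_eq {T : ℝ} [Fact (0 < T)]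
    {μ ν : Measure (AddCircle T)} [IsFiniteMeasure μ] [IsFiniteMeasure ν]
    (h : ∀ n : ℤ, ∫ t, fourier n t ∂μ = ∫ t, fourier n t ∂ν) : μ = ν := by
  have hspan : ∀ c ∈ Submodule.span ℂ (Set.range (fourier (T := T))),
      ∫ t, c t ∂μ = ∫ t, c t ∂ν := by
    intro c hc
    induction hc using Submodule.span_induction with
    | mem c hc => obtain ⟨n, rfl⟩ := hc; exact h n
    | zero => simp
    | add c d _ _ hc hd =>
      simp only [ContinuousMap.add_apply]
      rw [integral_add, integral_add, hc, hd] <;>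
        exact (BoundedContinuousFunction.mkOfCompact _).integrable _
    | smul a c _ hc => simp [integral_const_mul, hc]
  refine ext_of_forall_mem_subalgebra_integral_eq_of_pseudoEMetric_complete_countable
    (A := fourierSubalgebra.comap (BoundedContinuousFunction.toContinuousMapStarₐ ℂ)) ?_
    fun g hg ↦ hspan _ (fourierSubalgebra_coe (T := T) ▸ hg)
  intro x y hxy
  obtain ⟨_, ⟨c, hc, rfl⟩, hcxy⟩ := fourierSubalgebra_separatesPoints hxy
  exact ⟨c, ⟨c, ⟨.mkOfCompact c, hc, rfl⟩, rfl⟩, hcxy⟩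

/-- `∫ fourier (-n) ∂μ` is the `n`-th Fourier coefficient of `μ`; the coefficients of negative
index are their conjugates. -/
theorem AddCircle.measure_ext_of_integral_fourier_neg_eq {T : ℝ} [Fact (0 < T)]
    {μ ν : Measure (AddCircle T)} [IsFiniteMeasure μ] [IsFiniteMeasure ν]
    (h : ∀ n : ℕ, ∫ t, fourier (-n) t ∂μ = ∫ t, fourier (-n) t ∂ν) : μ = ν := by
  have hconj (ρ : Measure (AddCircle T)) (n : ℤ) :
      ∫ t, fourier n t ∂ρ = conj (∫ t, fourier (-n) t ∂ρ) := by
    simp_rw [← integral_conj, fourier_neg, conj_conj]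
  refine measure_ext_of_integral_fourier_eq fun n ↦ ?_
  obtain ⟨m, rfl | rfl⟩ := n.eq_nat_or_neg
  · rw [hconj μ, hconj ν, h]
  · exact h m

lemma AddCircle.ae_eq_one_of_integral_smul_fourier_neg_succ_eq_zero {T : ℝ} [Fact (0 < T)]
    {w : AddCircle T → ℝ} (hw : Integrable w haarAddCircle) (hw_nonneg : ∀ t, 0 ≤ w t)
    (hw_mass : ∫ t, w t ∂haarAddCircle = 1)
    (hw_coeff : ∀ n : ℕ, ∫ t, w t • fourier (-(n + 1 : ℕ)) t ∂haarAddCircle = 0) :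
    w =ᵐ[haarAddCircle] 1 := by
  set ν := haarAddCircle.withDensity fun t ↦ ENNReal.ofReal (w t)
  have : IsFiniteMeasure ν := isFiniteMeasure_withDensity_ofReal hw.hasFiniteIntegral
  have hw_meas : AEMeasurable (fun t ↦ ENNReal.ofReal (w t)) haarAddCircle :=
    hw.aemeasurable.ennreal_ofReal
  have hν : ν = haarAddCircle := by
    refine measure_ext_of_integral_fourier_neg_eq fun n ↦ ?_
    rw [integral_withDensity_eq_integral_toReal_smul₀ hw_meas (.of_forall fun _ ↦ by simp)]
    simp_rw [ENNReal.toReal_ofReal (hw_nonneg _)]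
    cases n with
    | zero => simp [integral_complex_ofReal, hw_mass]
    | succ n => rw [hw_coeff, integral_fourier_eq_zero (by omega)]
  conv_rhs at hν => rw [← withDensity_one (μ := haarAddCircle)]
  filter_upwards [(withDensity_eq_iff hw_meas aemeasurable_const hw.lintegral_lt_top.ne).1 hν]
    with t ht
  exact ENNReal.ofReal_eq_one.1 ht

lemma exists_mem_ae_eq_fourier_mul {M : Set (Lp ℂ 2 μT)} (hM : shiftSet M ⊆ M)
    {f : Lp ℂ 2 μT} (hf : f ∈ M) (n : ℕ) :
    ∃ g ∈ M, (g : 𝕋 → ℂ) =ᵐ[μT] fun t ↦ fourier n t * f t := by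
  induction n with
  | zero => exact ⟨f, hf, .of_forall fun t ↦ by simp⟩
  | succ n ih =>
    obtain ⟨g, hgM, hg⟩ := ih
    have hshift := (Lp.memLp g).fourier_mul 1
    refine ⟨hshift.toLp _, hM ⟨g, hgM, hshift.coeFn_toLp⟩, ?_⟩
    filter_upwards [hshift.coeFn_toLp, hg] with t h1 h2
    rw [h1, h2, ← mul_assoc, ← fourier_add, Nat.cast_succ, add_comm]

lemma integral_sq_norm_smul_fourier_neg_succ_eq_zero {M : Set (Lp ℂ 2 μT)}
    (hM : shiftSet M ⊆ M) {U : Lp ℂ 2 μT} (hUM : U ∈ M)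
    (hUorth : ∀ g ∈ M, ∫ t, U t * conj (fourier 1 t * g t) ∂μT = 0) (n : ℕ) :
    ∫ t, ‖U t‖ ^ 2 • fourier (-(n + 1 : ℕ)) t ∂μT = 0 := by
  obtain ⟨g, hgM, hg⟩ := exists_mem_ae_eq_fourier_mul hM hUM n
  rw [← hUorth g hgM]
  refine integral_congr_ae ?_
  filter_upwards [hg] with t ht
  rw [ht, Complex.real_smul, Complex.ofReal_pow, ← Complex.mul_conj', Nat.cast_succ, neg_add,
    fourier_add, fourier_neg, fourier_neg, map_mul, map_mul]
  ring

theorem unimodular_of_orthogonal_shift_general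
    (M : Submodule ℝ (Lp ℂ 2 μT))
    (hMinv : shiftSet (M : Set (Lp ℂ 2 μT)) ⊂ (M : Set (Lp ℂ 2 μT)))
    (U : Lp ℂ 2 μT) (hUM : U ∈ M) (hUnorm : ‖U‖ = 1)
    (hUorth : ∀ g ∈ M,
      ∫ t, (U : 𝕋 → ℂ) t * starRingEnd ℂ (fourier 1 t * (g : 𝕋 → ℂ) t) ∂μT = 0) :
    ∀ᵐ t ∂μT, ‖(U : 𝕋 → ℂ) t‖ = 1 := by
  have hUsq : ∀ᵐ t ∂μT, ‖U t‖ ^ 2 = 1 :=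
    AddCircle.ae_eq_one_of_integral_smul_fourier_neg_succ_eq_zero
      ((Lp.memLp U).integrable_norm_pow two_ne_zero) (fun _ ↦ sq_nonneg _)
      (by rw [L2.integral_norm_sq_eq_norm_sq, hUnorm, one_pow])
      (integral_sq_norm_smul_fourier_neg_succ_eq_zero hMinv.subset hUM hUorth)
  filter_upwards [hUsq] with t ht
  exact (pow_eq_one_iff_of_nonneg (norm_nonneg _) two_ne_zero).1 ht

/-- Let `M` be a simply invariant subspace of `RL²` and let `U ∈ M` with `‖U‖₂ = 1` be
orthogonal to `e^{iθ}M` (with respect to the inner product `⟨f,g⟩ = ∫ f ⋅ conj g dθ/2π`).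
Then `|U| = 1` almost everywhere. -/
theorem unimodular_of_orthogonal_shift
    (M : Submodule ℝ (Lp ℂ 2 μT))
    (hMsub : (M : Set (Lp ℂ 2 μT)) ⊆ RL2)
    (hMclosed : IsClosed (M : Set (Lp ℂ 2 μT)))
    (hMinv : shiftSet (M : Set (Lp ℂ 2 μT)) ⊂ (M : Set (Lp ℂ 2 μT)))
    (U : Lp ℂ 2 μT) (hUM : U ∈ M) (hUnorm : ‖U‖ = 1)
    (hUorth : ∀ g ∈ M,
      ∫ t, (U : 𝕋 → ℂ) t * starRingEnd ℂ (fourier 1 t * (g : 𝕋 → ℂ) t) ∂μT = 0) :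
    ∀ᵐ t ∂μT, ‖(U : 𝕋 → ℂ) t‖ = 1 :=
  unimodular_of_orthogonal_shift_general M hMinv U hUM hUnorm hUorth

end
end

section
/- Let U ∈ RL^2 with ‖U‖_2 = 1 be such that U is orthogonal to e^{inθ}U for every integer n ≥ 1. Then ∫_{-π}^{π} e^{inθ} |U(e^{iθ})|^2 dθ = 0 for all integers n ≠ 0, and consequently |U| = 1 almost everywhere on T. -/
open MeasureTheory Complex

noncomputable section

/-!
Orthogonality of `U` and `e_n U` says that the `n`-th Fourier coefficient of `|U|²` vanishes
for `n ≥ 1`; since `|U|²` is real, so do those with `n ≤ -1`, and the `0`-th one is `‖U‖² = 1`.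
Hence `|U|²` and `1` have the same Fourier coefficients, and Fourier coefficients determine an
integrable function on the circle: pairing with it is a continuous functional on `C(𝕋, ℂ)`
vanishing on the dense span of the characters, and an integrable function orthogonal to all
continuous functions has zero integral over every closed set.
-/

open Filter Topology Set Submodule ComplexConjugate
open scoped NNReal BoundedContinuousFunction

theorem ae_eq_zero_of_forall_integral_smul_eq_zero {X E : Type*} [TopologicalSpace X]
    [MeasurableSpace X] [BorelSpace X] [HasOuterApproxClosed X]
    [NormedAddCommGroup E] [NormedSpace ℝ E] [CompleteSpace E] {μ : Measure X} {f : X → E}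
    (hf : Integrable f μ) (h : ∀ g : X →ᵇ ℝ≥0, ∫ x, (g x : ℝ) • f x ∂μ = 0) :
    f =ᵐ[μ] 0 := by
  refine ae_eq_zero_of_forall_setIntegral_isClosed_eq_zero hf fun s hs => ?_
  have hlim : Tendsto (fun n => ∫ x, (hs.apprSeq n x : ℝ) • f x ∂μ) atTop
      (𝓝 (∫ x, s.indicator f x ∂μ)) := by
    refine tendsto_integral_of_dominated_convergence (fun x => ‖f x‖)
      (fun n => (NNReal.continuous_coe.comp (hs.apprSeq n).continuous).aestronglyMeasurable.smul
        hf.1)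
      hf.norm (fun n => ae_of_all _ fun x => ?_) (ae_of_all _ fun x => ?_)
    · rw [norm_smul, Real.norm_of_nonneg (hs.apprSeq n x).coe_nonneg]
      exact mul_le_of_le_one_left (norm_nonneg _)
        (HasOuterApproxClosed.apprSeq_apply_le_one hs n x)
    · have hind :
          s.indicator f x = ((s.indicator (fun _ => (1 : ℝ≥0)) x : ℝ≥0) : ℝ) • f x := by
        by_cases hx : x ∈ s <;> simp [hx]
      rw [hind]
      exact ((NNReal.continuous_coe.tendsto _).comp
        (tendsto_pi_nhds.1 (HasOuterApproxClosed.tendsto_apprSeq hs) x)).smul_const (f x)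
  simp only [h, tendsto_const_nhds_iff] at hlim
  rw [← integral_indicator hs.measurableSet, hlim]

section IntegralMul

variable {X : Type*} [TopologicalSpace X] [CompactSpace X] [MeasurableSpace X]
  [OpensMeasurableSpace X] {μ : Measure X} {f : X → ℂ}

theorem MeasureTheory.Integrable.continuousMap_mul (hf : Integrable f μ) (g : C(X, ℂ)) :
    Integrable (fun x => g x * f x) μ :=
  hf.bdd_mul g.continuous.aestronglyMeasurable (ae_of_all _ g.norm_coe_le_norm)

def integralMulCLM (hf : Integrable f μ) : C(X, ℂ) →L[ℂ] ℂ :=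
  LinearMap.mkContinuous
    { toFun := fun g => ∫ x, g x * f x ∂μ
      map_add' := fun g h => by
        simp only [ContinuousMap.add_apply, add_mul]
        exact integral_add (hf.continuousMap_mul g) (hf.continuousMap_mul h)
      map_smul' := fun c g => by
        simp only [ContinuousMap.smul_apply, smul_eq_mul, mul_assoc, RingHom.id_apply]
        exact integral_const_mul c _ }
    (∫ x, ‖f x‖ ∂μ) fun g => by
      rw [mul_comm, ← integral_const_mul]
      refine norm_integral_le_of_norm_le (hf.norm.const_mul _) (ae_of_all _ fun x => ?_)
      rw [norm_mul]
      exact mul_le_mul_of_nonneg_right (g.norm_coe_le_norm x) (norm_nonneg _)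

theorem integralMulCLM_apply (hf : Integrable f μ) (g : C(X, ℂ)) :
    integralMulCLM hf g = ∫ x, g x * f x ∂μ := rfl

end IntegralMul

namespace MeasureTheory.L2

variable {α 𝕜 E : Type*} [MeasurableSpace α] {μ : Measure α} [RCLike 𝕜] [NormedAddCommGroup E]
  [InnerProductSpace 𝕜 E]

theorem integrable_ofReal_norm_sq (f : Lp E 2 μ) :
    Integrable (fun x => (‖f x‖ : 𝕜) ^ 2) μ := by
  simpa only [inner_self_eq_norm_sq_to_K] using L2.integrable_inner (𝕜 := 𝕜) f f

theorem integral_ofReal_norm_sq (f : Lp E 2 μ) :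
    ∫ x, (‖f x‖ : 𝕜) ^ 2 ∂μ = (‖f‖ : 𝕜) ^ 2 := by
  simp_rw [← inner_self_eq_norm_sq_to_K (𝕜 := 𝕜)]
  exact (L2.inner_def f f).symm

end MeasureTheory.L2

namespace AddCircle

variable {T : ℝ} [Fact (0 < T)]

theorem fourierCoeff_ofReal_neg (f : AddCircle T → ℝ) (n : ℤ) :
    fourierCoeff (fun t => (f t : ℂ)) (-n) = conj (fourierCoeff (fun t => (f t : ℂ)) n) := by
  simp only [fourierCoeff, smul_eq_mul, ← integral_conj, map_mul, conj_ofReal, fourier_neg]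

theorem fourierCoeff_ofReal_eq_zero_of_forall_pos {f : AddCircle T → ℝ}
    (h : ∀ n : ℤ, 0 < n → fourierCoeff (fun t => (f t : ℂ)) n = 0) {n : ℤ}
    (hn : n ≠ 0) :
    fourierCoeff (fun t => (f t : ℂ)) n = 0 := by
  rcases hn.lt_or_gt with hneg | hpos
  · rw [← neg_neg n, fourierCoeff_ofReal_neg, h (-n) (neg_pos.2 hneg), map_zero]
  · exact h n hpos

theorem fourierCoeff_norm_sq_eq_integral_mul_conj (f : AddCircle T → ℂ) (n : ℤ) :
    fourierCoeff (fun t => (‖f t‖ : ℂ) ^ 2) n =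
      ∫ t, f t * conj (fourier n t * f t) ∂haarAddCircle := by
  rw [fourierCoeff]
  congr with t
  rw [map_mul, ← fourier_neg, smul_eq_mul, mul_left_comm, mul_conj']

theorem integral_mul_eq_zero_of_fourierCoeff_eq_zero {f : AddCircle T → ℂ}
    (hf : Integrable f haarAddCircle) (hcoeff : ∀ n, fourierCoeff f n = 0)
    (g : C(AddCircle T, ℂ)) : ∫ t, g t * f t ∂haarAddCircle = 0 := by
  have hspan :
      span ℂ (range (fourier (T := T))) ≤ LinearMap.ker (integralMulCLM hf).toLinearMap := by
    refine span_le.2 ?_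
    rintro - ⟨n, rfl⟩
    simpa [integralMulCLM_apply, fourierCoeff] using hcoeff (-n)
  have hclosure := topologicalClosure_minimal _ hspan (integralMulCLM hf).isClosed_ker
  rw [span_fourier_closure_eq_top] at hclosure
  exact hclosure (mem_top (x := g))

theorem ae_eq_of_fourierCoeff_eq {f g : AddCircle T → ℂ} (hf : Integrable f haarAddCircle)
    (hg : Integrable g haarAddCircle) (hfg : fourierCoeff f = fourierCoeff g) :
    f =ᵐ[haarAddCircle] g := by
  have hcoeff : ∀ n, fourierCoeff (f - g) n = 0 := fun n => by
    have hsub := integral_sub (hf.fourier_smul (-n)) (hg.fourier_smul (-n))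
    rw [← fourierCoeff, ← fourierCoeff, hfg, sub_self] at hsub
    simpa only [fourierCoeff, Pi.sub_apply, smul_sub] using hsub
  refine (ae_eq_zero_of_forall_integral_smul_eq_zero (hf.sub hg) fun φ => ?_).mono
    fun t => sub_eq_zero.1
  simp_rw [Complex.real_smul]
  exact integral_mul_eq_zero_of_fourierCoeff_eq_zero (hf.sub hg) hcoeff
    ⟨fun t => (φ t : ℂ), by fun_prop⟩

end AddCircle

theorem unimodular_of_orthogonal_shifts_general
    (U : Lp ℂ 2 μT)
    (hUnorm : ‖U‖ = 1)
    (hUorth : ∀ n : ℤ, 1 ≤ n →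
      ∫ t, (U : 𝕋 → ℂ) t * starRingEnd ℂ (fourier n t * (U : 𝕋 → ℂ) t) ∂μT = 0) :
    (∀ n : ℤ, n ≠ 0 →
      ∫ t, fourier n t * ((‖(U : 𝕋 → ℂ) t‖ : ℂ))^2 ∂μT = 0) ∧
    ∀ᵐ t ∂μT, ‖(U : 𝕋 → ℂ) t‖ = 1 := by
  have hw_int : Integrable (fun t => (‖(U : 𝕋 → ℂ) t‖ : ℂ) ^ 2) μT :=
    L2.integrable_ofReal_norm_sq U
  set w : 𝕋 → ℂ := fun t => (‖(U : 𝕋 → ℂ) t‖ : ℂ) ^ 2 with hw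
  have hcoeff_ne : ∀ n : ℤ, n ≠ 0 → fourierCoeff w n = 0 := by
    simp only [hw, ← ofReal_pow]
    refine fun n => AddCircle.fourierCoeff_ofReal_eq_zero_of_forall_pos fun m hm => ?_
    simpa only [ofReal_pow, AddCircle.fourierCoeff_norm_sq_eq_integral_mul_conj] using hUorth m hm
  have hcoeff : fourierCoeff w = fourierCoeff (fourier (T := 2 * Real.pi) 0) := by
    ext n
    rw [fourierCoeff_fourier]
    obtain rfl | hn := eq_or_ne n 0
    · simpa [fourierCoeff, hw, hUnorm] using L2.integral_ofReal_norm_sq (𝕜 := ℂ) U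
    · rw [hcoeff_ne n hn, Pi.single_eq_of_ne hn]
  refine ⟨fun n hn => by simpa [fourierCoeff] using hcoeff_ne (-n) (neg_ne_zero.2 hn), ?_⟩
  filter_upwards [AddCircle.ae_eq_of_fourierCoeff_eq hw_int
    ((map_continuous _).integrable_of_hasCompactSupport (.of_compactSpace _)) hcoeff] with t ht
  simp only [hw, fourier_zero] at ht
  norm_cast at ht
  exact (pow_eq_one_iff_of_nonneg (norm_nonneg _) two_ne_zero).1 ht

/-- Let `U ∈ RL²` with `‖U‖₂ = 1` be orthogonal to `e^{inθ}U` for every integer `n ≥ 1`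
(with respect to the inner product `⟨f,g⟩ = ∫ f ⋅ conj g dθ/2π`).  Then
`∫ e^{inθ}|U|² dθ = 0` for every integer `n ≠ 0`, and consequently `|U| = 1` almost
everywhere. -/
theorem unimodular_of_orthogonal_shifts
    (U : Lp ℂ 2 μT)
    (hUreal : ∀ n : ℤ, (fourierCoeff (U : 𝕋 → ℂ) n).im = 0)
    (hUnorm : ‖U‖ = 1)
    (hUorth : ∀ n : ℤ, 1 ≤ n →
      ∫ t, (U : 𝕋 → ℂ) t * starRingEnd ℂ (fourier n t * (U : 𝕋 → ℂ) t) ∂μT = 0) :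
    (∀ n : ℤ, n ≠ 0 →
      ∫ t, fourier n t * ((‖(U : 𝕋 → ℂ) t‖ : ℂ))^2 ∂μT = 0) ∧
    ∀ᵐ t ∂μT, ‖(U : 𝕋 → ℂ) t‖ = 1 :=
  unimodular_of_orthogonal_shifts_general U hUnorm hUorth

end
end

section
/- Let U be a unimodular function in RL^2 (|U| = 1 almost everywhere). Then the closed linear span in RL^2 of the set { e^{inθ}U : n ∈ ℤ } is all of RL^2. -/
/-!
Multiplication by `U` is a unitary operator on `L²`, so the shifts `e_n U`, the image of the
Fourier basis, span a dense complex subspace. Inner products of elements of `RL²` are real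
(Parseval), so `RL²` is orthogonal over `ℝ` to `i • RL²`. Hence if `y + i z`, with `y`, `z` in
the real span of the shifts, approximates `f ∈ RL²`, then `y` alone approximates `f` at least as
well.
-/

open MeasureTheory Complex

noncomputable section

open scoped InnerProductSpace ENNReal ComplexConjugate

section RealForm

variable {E : Type*} [NormedAddCommGroup E] [InnerProductSpace ℂ E]

theorem norm_le_norm_sub_I_smul_of_im_inner_eq_zero {a b : E} (h : (⟪a, b⟫_ℂ).im = 0) :
    ‖a‖ ≤ ‖a - I • b‖ := by
  have hre : RCLike.re ⟪a, I • b⟫_ℂ = 0 := by simp [h]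
  have hsq := @norm_sub_sq ℂ _ _ _ _ a (I • b)
  rw [hre] at hsq
  nlinarith [norm_nonneg a, norm_nonneg (a - I • b), sq_nonneg ‖I • b‖]

theorem exists_eq_add_I_smul_of_mem_span_complex {S : Set E} {h : E}
    (hh : h ∈ Submodule.span ℂ S) :
    ∃ y ∈ Submodule.span ℝ S, ∃ z ∈ Submodule.span ℝ S, h = y + I • z := by
  induction hh using Submodule.span_induction with
  | mem x hx => exact ⟨x, Submodule.subset_span hx, 0, zero_mem _, by simp⟩
  | zero => exact ⟨0, zero_mem _, 0, zero_mem _, by simp⟩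
  | add _ _ _ _ h₁ h₂ =>
    obtain ⟨y₁, hy₁, z₁, hz₁, rfl⟩ := h₁
    obtain ⟨y₂, hy₂, z₂, hz₂, rfl⟩ := h₂
    exact ⟨y₁ + y₂, add_mem hy₁ hy₂, z₁ + z₂, add_mem hz₁ hz₂, by rw [smul_add]; abel⟩
  | smul c _ _ h =>
    obtain ⟨y, hy, z, hz, rfl⟩ := h
    refine ⟨c.re • y - c.im • z, sub_mem (Submodule.smul_mem _ _ hy) (Submodule.smul_mem _ _ hz),
      c.im • y + c.re • z, add_mem (Submodule.smul_mem _ _ hy) (Submodule.smul_mem _ _ hz), ?_⟩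
    simp only [← Complex.coe_smul]
    match_scalars <;> simp [Complex.ext_iff]

theorem subset_closure_span_real_of_dense_span_complex {V : Submodule ℝ E}
    (hV : ∀ v ∈ V, ∀ w ∈ V, (⟪v, w⟫_ℂ).im = 0) {S : Set E} (hSV : S ⊆ V)
    (hS : Dense (Submodule.span ℂ S : Set E)) :
    (V : Set E) ⊆ closure (Submodule.span ℝ S) := by
  intro f hf
  rw [Metric.mem_closure_iff]
  intro ε hε
  obtain ⟨h, hh, hfh⟩ := hS.exists_dist_lt f hε
  obtain ⟨y, hy, z, hz, rfl⟩ := exists_eq_add_I_smul_of_mem_span_complex hh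
  have hspan : Submodule.span ℝ S ≤ V := Submodule.span_le.2 hSV
  refine ⟨y, hy, ?_⟩
  calc dist f y = ‖f - y‖ := dist_eq_norm f y
    _ ≤ ‖(f - y) - I • z‖ := norm_le_norm_sub_I_smul_of_im_inner_eq_zero
        (hV _ (V.sub_mem hf (hspan hy)) _ (hspan hz))
    _ = dist f (y + I • z) := by rw [dist_eq_norm, sub_sub]
    _ < ε := hfh

end RealForm

section Unimodular

variable {α : Type*} [MeasurableSpace α] {μ : Measure α} {p : ℝ≥0∞} {u : α → ℂ}

theorem MeasureTheory.eLpNorm_mul_unimodular (g : α → ℂ) (hu1 : ∀ᵐ x ∂μ, ‖u x‖ = 1) :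
    eLpNorm (fun x => g x * u x) p μ = eLpNorm g p μ :=
  eLpNorm_congr_norm_ae (hu1.mono fun x hx => by simp [hx])

theorem MeasureTheory.MemLp.mul_unimodular {g : α → ℂ} (hg : MemLp g p μ)
    (hu : AEStronglyMeasurable u μ) (hu1 : ∀ᵐ x ∂μ, ‖u x‖ = 1) :
    MemLp (fun x => g x * u x) p μ :=
  ⟨hg.1.mul hu, eLpNorm_mul_unimodular g hu1 ▸ hg.2⟩

variable [Fact (1 ≤ p)]

def mulUnimodular (hu : AEStronglyMeasurable u μ) (hu1 : ∀ᵐ x ∂μ, ‖u x‖ = 1) :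
    Lp ℂ p μ →ₗᵢ[ℂ] Lp ℂ p μ where
  toFun g := ((Lp.memLp g).mul_unimodular hu hu1).toLp _
  map_add' g h := by
    rw [← MemLp.toLp_add]
    refine MemLp.toLp_congr _ _ ?_
    filter_upwards [Lp.coeFn_add g h] with x hx
    simp only [hx, Pi.add_apply, add_mul]
  map_smul' c g := by
    rw [RingHom.id_apply, ← MemLp.toLp_const_smul]
    refine MemLp.toLp_congr _ _ ?_
    filter_upwards [Lp.coeFn_smul c g] with x hx
    simp only [hx, Pi.smul_apply, smul_eq_mul, mul_assoc]
  norm_map' g := by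
    simp only [LinearMap.coe_mk, AddHom.coe_mk]
    rw [Lp.norm_toLp, eLpNorm_mul_unimodular _ hu1, Lp.norm_def]

theorem coeFn_mulUnimodular (hu : AEStronglyMeasurable u μ) (hu1 : ∀ᵐ x ∂μ, ‖u x‖ = 1)
    (g : Lp ℂ p μ) : mulUnimodular hu hu1 g =ᵐ[μ] fun x => g x * u x :=
  MemLp.coeFn_toLp ((Lp.memLp g).mul_unimodular hu hu1)

theorem mulUnimodular_surjective (hu : AEStronglyMeasurable u μ) (hu1 : ∀ᵐ x ∂μ, ‖u x‖ = 1) :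
    Function.Surjective (mulUnimodular (p := p) hu hu1) := by
  have hv : AEStronglyMeasurable (fun x => conj (u x)) μ :=
    Complex.continuous_conj.comp_aestronglyMeasurable hu
  have hv1 : ∀ᵐ x ∂μ, ‖conj (u x)‖ = 1 := hu1.mono fun x hx => by rwa [Complex.norm_conj]
  intro f
  refine ⟨mulUnimodular hv hv1 f, Lp.ext ?_⟩
  filter_upwards [coeFn_mulUnimodular hu hu1 (mulUnimodular hv hv1 f),
    coeFn_mulUnimodular hv hv1 f, hu1] with x h₁ h₂ hx
  rw [h₁, h₂, mul_assoc, ← Complex.normSq_eq_conj_mul_self, Complex.normSq_eq_norm_sq, hx]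
  simp

end Unimodular

theorem fourierCoeff_fourier_smul {T : ℝ} [Fact (0 < T)] {E : Type*} [NormedAddCommGroup E]
    [NormedSpace ℂ E] (f : AddCircle T → E) (n m : ℤ) :
    fourierCoeff (fun t => fourier n t • f t) m = fourierCoeff f (m - n) := by
  refine integral_congr_ae (Filter.Eventually.of_forall fun t => ?_)
  simp only [smul_smul, ← fourier_add]
  congr 3
  ring

def fourierCoeffImCLM (n : ℤ) : Lp ℂ 2 μT →L[ℝ] ℝ :=
  imCLM ∘L (innerSL ℂ (fourierLp 2 n)).restrictScalars ℝ

theorem fourierCoeffImCLM_apply (n : ℤ) (f : Lp ℂ 2 μT) :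
    fourierCoeffImCLM n f = (fourierCoeff (f : 𝕋 → ℂ) n).im := by
  simp [fourierCoeffImCLM, ← fourierBasis_repr, HilbertBasis.repr_apply_apply, coe_fourierBasis]

def RL2Submodule : Submodule ℝ (Lp ℂ 2 μT) :=
  ⨅ n, (fourierCoeffImCLM n).ker

theorem mem_RL2Submodule {f : Lp ℂ 2 μT} : f ∈ RL2Submodule ↔ f ∈ RL2 := by
  simp [RL2Submodule, RL2, fourierCoeffImCLM_apply]

theorem coe_RL2Submodule : (RL2Submodule : Set (Lp ℂ 2 μT)) = RL2 :=
  Set.ext fun _ => mem_RL2Submodule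

theorem isClosed_RL2Submodule : IsClosed (RL2Submodule : Set (Lp ℂ 2 μT)) := by
  rw [RL2Submodule, Submodule.coe_iInf]
  exact isClosed_iInter fun n => (fourierCoeffImCLM n).isClosed_ker

theorem im_inner_eq_zero_of_mem_RL2 {f g : Lp ℂ 2 μT} (hf : f ∈ RL2) (hg : g ∈ RL2) :
    (⟪f, g⟫_ℂ).im = 0 := by
  refine (hasSum_im (fourierBasis.hasSum_inner_mul_inner f g)).unique ?_
  convert hasSum_zero with n
  rw [← inner_conj_symm, ← HilbertBasis.repr_apply_apply, ← HilbertBasis.repr_apply_apply,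
    fourierBasis_repr, fourierBasis_repr]
  simp [Complex.mul_im, hf n, hg n]

theorem dense_span_range_mulUnimodular_fourierLp {u : 𝕋 → ℂ} (hu : AEStronglyMeasurable u μT)
    (hu1 : ∀ᵐ t ∂μT, ‖u t‖ = 1) :
    Dense (Submodule.span ℂ (Set.range fun n => mulUnimodular hu hu1 (fourierLp 2 n)) :
      Set (Lp ℂ 2 μT)) := by
  have hb := Submodule.dense_iff_topologicalClosure_eq_top.2
    (fourierBasis (T := 2 * Real.pi)).dense_span
  rw [coe_fourierBasis] at hb
  have := (mulUnimodular_surjective hu hu1).denseRange.dense_image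
    (mulUnimodular hu hu1).continuous hb
  rw [Set.range_comp']
  exact this.mono (Submodule.image_span_subset_span (mulUnimodular hu hu1).toLinearMap _)

/-- Let `U` be a unimodular function in `RL²`.  Then the closed (real) linear span in `RL²`
of the set `{e^{inθ}U : n ∈ ℤ}` is all of `RL²`. -/
theorem span_shifts_of_unimodular_dense
    (U : Lp ℂ 2 μT)
    (hUreal : ∀ n : ℤ, (fourierCoeff (U : 𝕋 → ℂ) n).im = 0)
    (hUuni : ∀ᵐ t ∂μT, ‖(U : 𝕋 → ℂ) t‖ = 1) :
    closure (↑(Submodule.span ℝ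
        {g : Lp ℂ 2 μT | ∃ n : ℤ,
          (g : 𝕋 → ℂ) =ᵐ[μT] fun t => fourier n t * (U : 𝕋 → ℂ) t}) : Set (Lp ℂ 2 μT))
      = RL2 := by
  set S : Set (Lp ℂ 2 μT) :=
    {g | ∃ n : ℤ, (g : 𝕋 → ℂ) =ᵐ[μT] fun t => fourier n t * (U : 𝕋 → ℂ) t}
  have hS : S ⊆ RL2Submodule := by
    rintro g ⟨n, hg⟩
    refine mem_RL2Submodule.2 fun m => ?_
    rw [fourierCoeff_congr_ae hg]
    exact (congrArg im (fourierCoeff_fourier_smul _ n m)).trans (hUreal (m - n))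
  have hU := Lp.aestronglyMeasurable U
  have hrange : Set.range (fun n => mulUnimodular hU hUuni (fourierLp 2 n)) ⊆ S := by
    rintro _ ⟨n, rfl⟩
    refine ⟨n, ?_⟩
    filter_upwards [coeFn_mulUnimodular hU hUuni (fourierLp 2 n), coeFn_fourierLp 2 n]
      with t h₁ h₂
    rw [h₁, h₂]
  rw [← coe_RL2Submodule]
  refine (closure_minimal (Submodule.span_le.2 hS) isClosed_RL2Submodule).antisymm ?_
  refine subset_closure_span_real_of_dense_span_complex (fun f hf g hg => ?_) hS
    ((dense_span_range_mulUnimodular_fourierLp hU hUuni).mono (Submodule.span_mono hrange))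
  exact im_inner_eq_zero_of_mem_RL2 (mem_RL2Submodule.1 hf) (mem_RL2Submodule.1 hg)

end
end
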